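/- Let G be a finite abelian group with unit element e. Then in the group algebra ℂ[x_g][G], the product over all characters χ of G of the elements ∑_{g ∈ G} χ(g) x_g g equals Θ(G)·e, where Θ(G) = det(x_{gh^{-1}})_{g,h ∈ G} is the group determinant. -/

import Mathlib

/-!
The Fourier transform `a ↦ (χ ↦ χ(a))` is an injective algebra map `R[G] → R^Ĝ`, by the
orthogonality of characters. It sends `∑ g, χ(g) x_g g` to `ψ ↦ λ(ψχ)`, where
`λ(χ) = ∑ g, χ(g) x_g`, so the product over all `χ` goes to the constant function `∏ λ`, which is
also the image of `(∏ λ)·e`. Finally `Θ(G) = ∏ λ`, because the (invertible) character table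
diagonalizes the group matrix `(x_{gh⁻¹})` with eigenvalues `λ(χ)`.
-/

open Finset MonoidAlgebra

theorem Matrix.det_eq_det_of_mul_eq_mul {ι κ R : Type*} [CommRing R] [Fintype ι] [Fintype κ]
    [DecidableEq ι] [DecidableEq κ] (e : ι ≃ κ) {S : Matrix κ ι R} {T : Matrix ι κ R}
    (hST : IsUnit (S * T).det) {M : Matrix κ κ R} {D : Matrix ι ι R} (h : T * M = D * T) :
    M.det = D.det := by
  set T' : Matrix κ κ R := T.submatrix e.symm id
  have hT' : IsUnit T'.det := by
    rw [← submatrix_id_id (S * T), ← submatrix_mul_equiv S T id e.symm id, det_mul] at hST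
    exact isUnit_of_mul_isUnit_right hST
  have hconj : T' * M = D.submatrix e.symm e.symm * T' :=
    calc T' * M = (T * M).submatrix e.symm id :=
          (submatrix_mul T M e.symm id id Function.bijective_id).symm
      _ = D.submatrix e.symm e.symm * T' := by rw [h, submatrix_mul_equiv]
  refine hT'.mul_left_cancel ?_
  rw [← det_mul, hconj, det_mul, det_submatrix_equiv_self, mul_comm]

section

variable {G : Type*} [CommGroup G] {R : Type*} [CommRing R] [Algebra ℂ R]

variable (G R) in
noncomputable def fourierTransform : MonoidAlgebra R G →ₐ[R] ((G →* ℂˣ) → R) :=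
  lift R _ G (MonoidHom.pi fun χ => (algebraMap ℂ R : ℂ →* R).comp ((Units.coeHom ℂ).comp χ))

theorem fourierTransform_single (g : G) (r : R) (χ : G →* ℂˣ) :
    fourierTransform G R (single g r) χ = (χ g : ℂ) • r := by
  simp [fourierTransform, Algebra.smul_def, mul_comm]

variable [Fintype G]

def charSum (x : G → R) (χ : G →* ℂˣ) : R := ∑ g, (χ g : ℂ) • x g

theorem fourierTransform_apply (a : MonoidAlgebra R G) (χ : G →* ℂˣ) :
    fourierTransform G R a χ = charSum a.coeff χ := by
  induction a using MonoidAlgebra.induction_linear with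
  | zero => simp [charSum]
  | add a b ha hb => simp [ha, hb, charSum, smul_add, sum_add_distrib]
  | single g r =>
    classical
    simp [fourierTransform_single, charSum, Finsupp.single_apply]

theorem fourierTransform_sum_single_smul (x : G → R) (ψ χ : G →* ℂˣ) :
    fourierTransform G R (∑ g, single g ((ψ g : ℂ) • x g)) χ = charSum x (χ * ψ) := by
  simp [fourierTransform_single, charSum, smul_smul]

variable [Fintype (G →* ℂˣ)]

theorem sum_characters_apply_eq_zero {g : G} (hg : g ≠ 1) : ∑ χ : G →* ℂˣ, (χ g : ℂ) = 0 := by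
  obtain ⟨ψ, hψ⟩ := CommGroup.exists_apply_ne_one_of_hasEnoughRootsOfUnity G ℂ hg
  refine sum_hom_units_eq_zero ((Units.coeHom ℂ).comp (MonoidHom.eval g)) fun h => hψ ?_
  exact Units.ext (DFunLike.congr_fun h ψ)

theorem sum_characters_apply_inv_mul [DecidableEq G] (g h : G) :
    ∑ χ : G →* ℂˣ, (χ (h⁻¹ * g) : ℂ) = if g = h then (Fintype.card (G →* ℂˣ) : ℂ) else 0 := by
  split_ifs with hgh
  · simp [hgh]
  · exact sum_characters_apply_eq_zero (by rwa [Ne, inv_mul_eq_one, eq_comm])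

theorem sum_inv_smul_charSum (x : G → R) (h : G) :
    ∑ χ : G →* ℂˣ, (χ h⁻¹ : ℂ) • charSum x χ = (Fintype.card (G →* ℂˣ) : ℂ) • x h := by
  classical
  simp_rw [charSum, smul_sum, smul_smul, ← Units.val_mul, ← map_mul]
  rw [sum_comm]
  simp_rw [← sum_smul, sum_characters_apply_inv_mul, ite_smul, zero_smul, sum_ite_eq', mem_univ,
    if_true]

theorem charSum_injective : Function.Injective (charSum : (G → R) → (G →* ℂˣ) → R) := by
  intro x y hxy
  funext h
  have hcard : (Fintype.card (G →* ℂˣ) : ℂ) ≠ 0 := Nat.cast_ne_zero.mpr Fintype.card_ne_zero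
  apply smul_right_injective R hcard
  dsimp only
  rw [← sum_inv_smul_charSum, ← sum_inv_smul_charSum, hxy]

theorem fourierTransform_injective : Function.Injective (fourierTransform G R) :=
  fun a b h => MonoidAlgebra.ext <| DFunLike.coe_injective <| charSum_injective <|
    funext fun χ => by simpa only [fourierTransform_apply] using congrFun h χ

theorem det_groupMatrix_eq_prod_charSum [DecidableEq G] (x : G → R) :
    (Matrix.of fun g h : G => x (g * h⁻¹)).det = ∏ χ : G →* ℂˣ, charSum x χ := by
  classical
  obtain ⟨e⟩ := CommGroup.monoidHom_mulEquiv_of_hasEnoughRootsOfUnity G ℂ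
  let S : Matrix G (G →* ℂˣ) R := Matrix.of fun g χ => algebraMap ℂ R (χ g⁻¹)
  let T : Matrix (G →* ℂˣ) G R := Matrix.of fun χ g => algebraMap ℂ R (χ g)
  have hST : S * T = algebraMap ℂ R (Fintype.card (G →* ℂˣ)) • 1 := by
    ext g h
    simp only [S, T, Matrix.mul_apply, Matrix.of_apply, ← map_mul, ← Units.val_mul, ← map_sum,
      sum_characters_apply_inv_mul, Matrix.smul_apply, Matrix.one_apply, smul_eq_mul, mul_ite,
      mul_one, mul_zero]
    rw [apply_ite (algebraMap ℂ R), map_zero]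
    exact if_congr eq_comm rfl rfl
  have hcard : (Fintype.card (G →* ℂˣ) : ℂ) ≠ 0 := Nat.cast_ne_zero.mpr Fintype.card_ne_zero
  rw [← Matrix.det_diagonal]
  refine Matrix.det_eq_det_of_mul_eq_mul e.toEquiv (S := S) (T := T) ?_ ?_
  · rw [hST, Matrix.det_smul, Matrix.det_one, mul_one]
    exact ((IsUnit.mk0 _ hcard).map _).pow _
  · ext χ h
    rw [Matrix.diagonal_mul]
    simp only [T, Matrix.mul_apply, Matrix.of_apply, charSum, sum_mul]
    refine Fintype.sum_equiv (Equiv.mulRight h⁻¹) _ _ fun g => ?_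
    rw [Equiv.coe_mulRight, Algebra.smul_def, mul_right_comm, ← map_mul, ← Units.val_mul,
      ← map_mul, inv_mul_cancel_right]

end

/-- In the group algebra `ℂ[x_g][G]` of a finite abelian group `G`, the product over all
characters of `G` of the elements `∑ g, χ(g) x_g g` equals `Θ(G)·e`, where `Θ(G)` is the
group determinant. -/
theorem prod_all_characters_eq_groupDet_smul_one (G : Type*) [CommGroup G] [Fintype G]
    [DecidableEq G] [Fintype (G →* ℂˣ)] :
    (∏ χ : G →* ℂˣ,
        ∑ g : G, MonoidAlgebra.single g ((χ g : ℂ) • (MvPolynomial.X g : MvPolynomial G ℂ)))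
      = MonoidAlgebra.single (1 : G)
          (Matrix.det (Matrix.of fun g h : G => (MvPolynomial.X (g * h⁻¹) : MvPolynomial G ℂ))) := by
  refine fourierTransform_injective (funext fun χ => ?_)
  rw [map_prod, Finset.prod_apply, fourierTransform_single, map_one, Units.val_one, one_smul,
    det_groupMatrix_eq_prod_charSum]
  simp only [fourierTransform_sum_single_smul]
  exact Fintype.prod_equiv (Equiv.mulLeft χ) _ _ fun _ => rfl
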